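/- arXiv:2412.19540 — 3 statements merged into one kernel-verified Lean document; each statement's English description precedes it below -/
import Mathlib

section
/- For any two-dimensional subspace V of ℂ² ⊗ ℂ², the set of product lines in V (one-dimensional subspaces of V spanned by a simple tensor u ⊗ v) and the set of product lines in the orthogonal complement V⊥ have the same cardinality, and this common cardinality is either 1, 2, or infinite. -/
noncomputable section

/-- The single-qubit Hilbert space ℂ². -/
abbrev E2 := EuclideanSpace ℂ (Fin 2)

/-- The two-qubit Hilbert space ℂ² ⊗ ℂ², realized as EuclideanSpace over Fin 2 × Fin 2. -/
abbrev E4 := EuclideanSpace ℂ (Fin 2 × Fin 2)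

/-- Standard basis vector of ℂ². -/
def e (i : Fin 2) : E2 := EuclideanSpace.single i 1

/-- The simple tensor (product vector) u ⊗ v in ℂ² ⊗ ℂ². -/
def tp (u v : E2) : E4 := WithLp.toLp 2 (fun p : Fin 2 × Fin 2 => u p.1 * v p.2)

/-- The standard basis vector |ij⟩ = e_i ⊗ e_j of ℂ² ⊗ ℂ². -/
def ket (i j : Fin 2) : E4 := tp (e i) (e j)


/-- The set of product lines in a subspace W: one-dimensional subspaces of W spanned by a
nonzero simple tensor u ⊗ v. -/
def productLines (W : Submodule ℂ E4) : Set (Submodule ℂ E4) :=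
  {L | ∃ u v : E2, tp u v ≠ 0 ∧ L = Submodule.span ℂ {tp u v} ∧ L ≤ W}

/-!
View `x ∈ ℂ² ⊗ ℂ²` as the `2 × 2` matrix `(x (i, j))`: the product vectors are exactly the nonzero
`x` with `det x = 0`, so the product lines of `W` are the isotropic lines of the quadratic form
`det` on `W`. On a plane `W` this is a binary quadratic form over `ℂ`, which either vanishes
(infinitely many isotropic lines) or splits into two linear factors, whose kernels are the
isotropic lines; they coincide exactly when the polar form of `det` is degenerate on `W`.

The Hermitian inner product is `⟪x, y⟫ = polar det (K x) y` for the antilinear spin flip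
`K x = (adj x)ᴴ`, which preserves `det = 0`; hence `V⊥` is the polar-orthogonal `W'` of the plane
`W = K V`, which has as many product lines as `V`. Finally `W` and `W'` are totally isotropic
together (and then `W' = W`), and they are degenerate together, both having radical `W ⊓ W'`.
-/

open Module Submodule QuadraticMap Cardinal
open LinearMap (BilinForm)

theorem exists_mul_eq_of_mul_eq_mul {k : Type*} [Field k] {A B C D : k} (h : A * D = B * C) :
    ∃ u₀ u₁ v₀ v₁ : k, u₀ * v₀ = A ∧ u₀ * v₁ = B ∧ u₁ * v₀ = C ∧ u₁ * v₁ = D := by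
  by_cases hA : A = 0
  · by_cases hB : B = 0
    · exact ⟨0, 1, C, D, by simp [hA], by simp [hB], by ring, by ring⟩
    · refine ⟨1, D / B, A, B, by ring, by ring, ?_, by field_simp⟩
      field_simp
      linear_combination h
  · refine ⟨1, C / A, A, B, by ring, by ring, by field_simp, ?_⟩
    field_simp
    linear_combination -h

theorem exists_binary_quadratic_eq_mul {k : Type*} [Field k] [IsAlgClosed k] (α β γ : k) :
    ∃ p₁ q₁ p₂ q₂ : k, ∀ s t : k,
      s ^ 2 * α + s * t * β + t ^ 2 * γ = (p₁ * s + q₁ * t) * (p₂ * s + q₂ * t) := by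
  rcases eq_or_ne α 0 with rfl | hα
  · exact ⟨0, 1, β, γ, fun s t => by ring⟩
  obtain ⟨r, hr⟩ := IsAlgClosed.exists_root (Polynomial.C α * Polynomial.X ^ 2 +
    Polynomial.C β * Polynomial.X + Polynomial.C γ) (by rw [Polynomial.degree_quadratic hα]; simp)
  simp only [Polynomial.IsRoot, Polynomial.eval_add, Polynomial.eval_mul, Polynomial.eval_C,
    Polynomial.eval_pow, Polynomial.eval_X] at hr
  exact ⟨1, -r, α, β + α * r, fun s t => by linear_combination t ^ 2 * hr⟩

section LinearIndependentPair

variable {k M : Type*} [Field k] [AddCommGroup M] [Module k M] {a b : M} {p q p₁ q₁ p₂ q₂ : k}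

theorem LinearIndependent.smul_sub_smul_ne_zero (hab : LinearIndependent k ![a, b])
    (hpq : (p, q) ≠ 0) : q • a - p • b ≠ 0 := by
  intro h
  obtain ⟨hq, hp⟩ := LinearIndependent.pair_iff.1 hab q (-p) (by rwa [neg_smul, ← sub_eq_add_neg])
  exact hpq (by simp_all)

theorem span_singleton_smul_add_smul_eq {s t : k} (hpq : (p, q) ≠ 0) (hx : s • a + t • b ≠ 0)
    (h : p * s + q * t = 0) : k ∙ (s • a + t • b) = k ∙ (q • a - p • b) := by
  obtain ⟨c, hc⟩ : ∃ c : k, c • (q • a - p • b) = s • a + t • b := by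
    rcases eq_or_ne p 0 with rfl | hp
    · have hq : q ≠ 0 := by simpa using hpq
      obtain rfl : t = 0 := by simpa [hq] using h
      exact ⟨s / q, by simp [smul_smul, hq]⟩
    · refine ⟨-t / p, ?_⟩
      rw [smul_sub, smul_smul, smul_smul, sub_eq_add_neg, ← neg_smul]
      congr 2
      · field_simp; linear_combination -h
      · field_simp
  have hc0 : c ≠ 0 := by rintro rfl; exact hx (by simp [← hc])
  rw [← hc, span_singleton_smul_eq (isUnit_iff_ne_zero.2 hc0)]

theorem LinearIndependent.span_singleton_smul_sub_smul_eq_iff (hab : LinearIndependent k ![a, b])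
    (h₁ : (p₁, q₁) ≠ 0) (h₂ : (p₂, q₂) ≠ 0) :
    k ∙ (q₁ • a - p₁ • b) = k ∙ (q₂ • a - p₂ • b) ↔ p₁ * q₂ - p₂ * q₁ = 0 := by
  constructor
  · intro h
    obtain ⟨c, hc⟩ := mem_span_singleton.1 (h ▸ mem_span_singleton_self (q₁ • a - p₁ • b))
    obtain ⟨hq, hp⟩ := LinearIndependent.pair_iff.1 hab (c * q₂ - q₁) (p₁ - c * p₂)
      (by linear_combination (norm := module) hc)
    linear_combination q₂ * hp + p₂ * hq
  · intro h
    rw [sub_eq_add_neg, ← neg_smul]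
    refine span_singleton_smul_add_smul_eq h₂ ?_ (by linear_combination -h)
    rw [neg_smul, ← sub_eq_add_neg]
    exact hab.smul_sub_smul_ne_zero h₁

end LinearIndependentPair

theorem exists_linearIndependent_pair_span_eq {k M : Type*} [Field k] [AddCommGroup M]
    [Module k M] {W : Submodule k M} (hW : finrank k W = 2) :
    ∃ a b : M, LinearIndependent k ![a, b] ∧ span k {a, b} = W := by
  have := Module.finite_of_finrank_eq_succ hW
  let B := finBasisOfFinrankEq k W hW
  have hB : ![(B 0 : M), B 1] = W.subtype ∘ B := by
    ext i; fin_cases i <;> rfl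
  refine ⟨B 0, B 1, hB ▸ B.linearIndependent.map' W.subtype W.ker_subtype, ?_⟩
  rw [← Matrix.range_cons_cons_empty, hB, Set.range_comp, span_image, B.span_eq, map_subtype_top]

theorem LinearEquiv.finrank_map_eq_of_semilinear {k M M' : Type*} [Field k] [AddCommGroup M]
    [Module k M] [AddCommGroup M'] [Module k M'] {σ σ' : k →+* k} [RingHomInvPair σ σ']
    [RingHomInvPair σ' σ] (e : M ≃ₛₗ[σ] M') (W : Submodule k M) :
    finrank k (W.map (e : M →ₛₗ[σ] M')) = finrank k W := by
  have hσ : Function.Bijective σ := Function.bijective_iff_has_inverse.2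
    ⟨σ', fun _ => RingHomInvPair.comp_apply_eq, fun _ => RingHomInvPair.comp_apply_eq₂⟩
  simpa [finrank] using congrArg Cardinal.toNat (lift_rank_eq_of_equiv_equiv σ
    (e.submoduleMap W).toAddEquiv hσ fun r x => (e.submoduleMap W).map_smulₛₗ r x).symm

namespace QuadraticForm

variable {k M : Type*} [Field k] [AddCommGroup M] [Module k M]

def isotropicLines (Q : QuadraticForm k M) (W : Submodule k M) : Set (Submodule k M) :=
  {L | ∃ x ∈ W, x ≠ 0 ∧ Q x = 0 ∧ L = k ∙ x}

variable (Q : QuadraticForm k M) {W : Submodule k M}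

theorem map_smul_add_smul (a b : M) (s t : k) :
    Q (s • a + t • b) = s ^ 2 * Q a + s * t * polar Q a b + t ^ 2 * Q b := by
  rw [show Q (s • a + t • b) = Q (s • a) + Q (t • b) + polar Q (s • a) (t • b) by
    rw [polar]; ring, polar_smul_left, polar_smul_right, QuadraticMap.map_smul,
    QuadraticMap.map_smul]
  simp only [smul_eq_mul]
  ring

theorem polarBilin_isRefl : (polarBilin Q).IsRefl := fun x y h => by
  rwa [polarBilin_apply_apply, polar_comm] at h

variable {Q}

section Pair

variable {a b : M} {p₁ q₁ p₂ q₂ : k}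

theorem isotropicLines_span_pair_eq (hab : LinearIndependent k ![a, b])
    (hQ : ∀ s t : k, Q (s • a + t • b) = (p₁ * s + q₁ * t) * (p₂ * s + q₂ * t))
    (h₁ : (p₁, q₁) ≠ 0) (h₂ : (p₂, q₂) ≠ 0) :
    isotropicLines Q (span k {a, b}) = {k ∙ (q₁ • a - p₁ • b), k ∙ (q₂ • a - p₂ • b)} := by
  have isotropic {p q : k} (hpq : (p, q) ≠ 0) (hfac : ∀ s t, (p * s + q * t) ∣ Q (s • a + t • b)) :
      k ∙ (q • a - p • b) ∈ isotropicLines Q (span k {a, b}) := by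
    refine ⟨_, mem_span_pair.2 ⟨q, -p, by rw [neg_smul, ← sub_eq_add_neg]⟩,
      hab.smul_sub_smul_ne_zero hpq, ?_, rfl⟩
    obtain ⟨c, hc⟩ := hfac q (-p)
    rw [sub_eq_add_neg, ← neg_smul, hc]
    ring
  ext L
  constructor
  · rintro ⟨x, hx, hx0, hQx, rfl⟩
    obtain ⟨s, t, rfl⟩ := mem_span_pair.1 hx
    rw [hQ] at hQx
    rcases mul_eq_zero.1 hQx with h | h
    · exact Or.inl (span_singleton_smul_add_smul_eq h₁ hx0 h)
    · exact Or.inr (span_singleton_smul_add_smul_eq h₂ hx0 h)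
  · rintro (rfl | rfl)
    · exact isotropic h₁ fun s t => hQ s t ▸ dvd_mul_right _ _
    · exact isotropic h₂ fun s t => hQ s t ▸ dvd_mul_left _ _

theorem polar_smul_add_smul_of_eq_mul
    (hQ : ∀ s t : k, Q (s • a + t • b) = (p₁ * s + q₁ * t) * (p₂ * s + q₂ * t)) (s t s' t' : k) :
    polar Q (s • a + t • b) (s' • a + t' • b) =
      (p₁ * s + q₁ * t) * (p₂ * s' + q₂ * t') + (p₁ * s' + q₁ * t') * (p₂ * s + q₂ * t) := by
  rw [polar, show s • a + t • b + (s' • a + t' • b) = (s + s') • a + (t + t') • b by module,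
    hQ, hQ, hQ]
  ring

theorem span_pair_inf_orthogonal_eq_bot_iff (hab : LinearIndependent k ![a, b])
    (hQ : ∀ s t : k, Q (s • a + t • b) = (p₁ * s + q₁ * t) * (p₂ * s + q₂ * t))
    (h₁ : (p₁, q₁) ≠ 0) :
    span k {a, b} ⊓ BilinForm.orthogonal (polarBilin Q) (span k {a, b}) = ⊥ ↔
      p₁ * q₂ - p₂ * q₁ ≠ 0 := by
  have hpolar := polar_smul_add_smul_of_eq_mul hQ
  constructor
  · intro h hD
    have hx : q₁ • a - p₁ • b ∈
        span k {a, b} ⊓ BilinForm.orthogonal (polarBilin Q) (span k {a, b}) := by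
      rw [sub_eq_add_neg, ← neg_smul]
      refine ⟨mem_span_pair.2 ⟨q₁, -p₁, rfl⟩, BilinForm.mem_orthogonal_iff.2 ?_⟩
      intro y hy
      obtain ⟨s, t, rfl⟩ := mem_span_pair.1 hy
      show polar Q _ _ = 0
      rw [hpolar]
      linear_combination (-(p₁ * s + q₁ * t)) * hD
    rw [h] at hx
    exact hab.smul_sub_smul_ne_zero h₁ hx
  · intro hD
    refine eq_bot_iff.2 fun x ⟨hx, hxo⟩ => ?_
    obtain ⟨s, t, rfl⟩ := mem_span_pair.1 hx
    have hxa : polar Q ((1 : k) • a + (0 : k) • b) (s • a + t • b) = 0 := by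
      simpa using BilinForm.mem_orthogonal_iff.1 hxo a (subset_span (Set.mem_insert a {b}))
    have hxb : polar Q ((0 : k) • a + (1 : k) • b) (s • a + t • b) = 0 := by
      simpa using BilinForm.mem_orthogonal_iff.1 hxo b (subset_span (Set.mem_insert_of_mem a rfl))
    rw [hpolar] at hxa hxb
    have cancel {x : k} (h : x * (p₁ * q₂ - p₂ * q₁) = 0) : x = 0 :=
      (mul_eq_zero.1 h).resolve_right hD
    have hu := cancel (x := p₁ * s + q₁ * t) (by linear_combination p₁ * hxb - q₁ * hxa)
    have hv := cancel (x := p₂ * s + q₂ * t) (by linear_combination q₂ * hxa - p₂ * hxb)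
    have hs := cancel (x := s) (by linear_combination q₂ * hu - q₁ * hv)
    have ht := cancel (x := t) (by linear_combination p₁ * hv - p₂ * hu)
    simp [hs, ht]

end Pair

theorem isotropicLines_infinite [Infinite k] (hW : finrank k W = 2) (hQ : ∀ x ∈ W, Q x = 0) :
    (isotropicLines Q W).Infinite := by
  obtain ⟨a, b, hab, rfl⟩ := exists_linearIndependent_pair_span_eq hW
  refine Set.infinite_of_injective_forall_mem (f := fun t : k => k ∙ ((1 : k) • a - t • b))
    (fun t t' h => ?_) (fun t => ?_)
  · simpa [sub_eq_zero] using
      (hab.span_singleton_smul_sub_smul_eq_iff (by simp) (by simp)).1 h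
  · have hmem : (1 : k) • a - t • b ∈ span k {a, b} :=
      mem_span_pair.2 ⟨1, -t, by rw [neg_smul, ← sub_eq_add_neg]⟩
    exact ⟨_, hmem, hab.smul_sub_smul_ne_zero (by simp), hQ _ hmem, rfl⟩

theorem card_isotropicLines_eq_ite [IsAlgClosed k] (hW : finrank k W = 2)
    (hQ : ¬ ∀ x ∈ W, Q x = 0) :
    #(isotropicLines Q W) = if W ⊓ BilinForm.orthogonal (polarBilin Q) W = ⊥ then 2 else 1 := by
  obtain ⟨a, b, hab, rfl⟩ := exists_linearIndependent_pair_span_eq hW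
  obtain ⟨p₁, q₁, p₂, q₂, hfac⟩ :=
    exists_binary_quadratic_eq_mul (Q a) (polar Q a b) (Q b)
  have hQ' (s t : k) : Q (s • a + t • b) = (p₁ * s + q₁ * t) * (p₂ * s + q₂ * t) := by
    rw [map_smul_add_smul, hfac]
  have factor_ne_zero {p q : k} (h : ∀ s t : k, (p * s + q * t) ∣ Q (s • a + t • b)) :
      (p, q) ≠ 0 := by
    rintro ⟨⟩
    refine hQ fun x hx => ?_
    obtain ⟨s, t, rfl⟩ := mem_span_pair.1 hx
    simpa using h s t
  have h₁ := factor_ne_zero fun s t => hQ' s t ▸ dvd_mul_right _ _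
  have h₂ := factor_ne_zero fun s t => hQ' s t ▸ dvd_mul_left _ _
  rw [isotropicLines_span_pair_eq hab hQ' h₁ h₂]
  split_ifs with hD <;> rw [span_pair_inf_orthogonal_eq_bot_iff hab hQ' h₁] at hD
  · rw [mk_insert (by simpa [hab.span_singleton_smul_sub_smul_eq_iff h₁ h₂] using hD),
      mk_singleton, one_add_one_eq_two]
  · rw [(hab.span_singleton_smul_sub_smul_eq_iff h₁ h₂).2 (not_not.1 hD), Set.pair_eq_singleton,
      mk_singleton]

theorem card_isotropicLines_eq_one_or_two_or_infinite [IsAlgClosed k] (hW : finrank k W = 2) :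
    #(isotropicLines Q W) = 1 ∨ #(isotropicLines Q W) = 2 ∨ (isotropicLines Q W).Infinite := by
  by_cases hQ : ∀ x ∈ W, Q x = 0
  · exact Or.inr (Or.inr (isotropicLines_infinite hW hQ))
  · rw [card_isotropicLines_eq_ite hW hQ]
    split_ifs <;> simp

theorem polarBilin_orthogonal_eq_self [FiniteDimensional k M] (hB : (polarBilin Q).Nondegenerate)
    (hM : finrank k M = finrank k W + finrank k W) (hQ : ∀ x ∈ W, Q x = 0) :
    BilinForm.orthogonal (polarBilin Q) W = W := by
  refine (eq_of_le_of_finrank_eq (fun x hx => BilinForm.mem_orthogonal_iff.2 fun y hy => ?_)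
    ?_).symm
  · show polar Q y x = 0
    rw [polar, hQ _ (add_mem hy hx), hQ y hy, hQ x hx, sub_zero, sub_zero]
  · rw [BilinForm.finrank_orthogonal hB]
    omega

theorem card_isotropicLines_polarBilin_orthogonal [FiniteDimensional k M] [IsAlgClosed k]
    (hB : (polarBilin Q).Nondegenerate) (hM : finrank k M = 4) (hW : finrank k W = 2) :
    #(isotropicLines Q (BilinForm.orthogonal (polarBilin Q) W)) = #(isotropicLines Q W) := by
  have hW' : finrank k (BilinForm.orthogonal (polarBilin Q) W) = 2 := by
    rw [BilinForm.finrank_orthogonal hB]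
    omega
  have orthogonal_orthogonal := BilinForm.orthogonal_orthogonal hB (polarBilin_isRefl Q) W
  by_cases hQ : ∀ x ∈ W, Q x = 0
  · rw [polarBilin_orthogonal_eq_self hB (by omega) hQ]
  have hQ' : ¬ ∀ x ∈ BilinForm.orthogonal (polarBilin Q) W, Q x = 0 := fun h => by
    have hself := polarBilin_orthogonal_eq_self hB (by omega) h
    rw [orthogonal_orthogonal] at hself
    exact hQ (hself ▸ h)
  rw [card_isotropicLines_eq_ite hW hQ, card_isotropicLines_eq_ite hW' hQ', orthogonal_orthogonal,
    inf_comm]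

section Semilinear

variable {σ σ' : k →+* k} [RingHomInvPair σ σ'] [RingHomInvPair σ' σ]
  {Q' : QuadraticForm k M}

theorem isotropicLines_map (e : M ≃ₛₗ[σ] M) (he : ∀ x, Q' (e x) = 0 ↔ Q x = 0)
    (W : Submodule k M) :
    isotropicLines Q' (W.map (e : M →ₛₗ[σ] M)) = map (e : M →ₛₗ[σ] M) '' isotropicLines Q W := by
  ext L
  constructor
  · rintro ⟨_, ⟨x, hx, rfl⟩, hx0, hQx, rfl⟩
    exact ⟨k ∙ x, ⟨x, hx, by simpa using hx0, (he x).1 hQx, rfl⟩, by simp [map_span]⟩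
  · rintro ⟨_, ⟨x, hx, hx0, hQx, rfl⟩, rfl⟩
    exact ⟨e x, mem_map_of_mem hx, by simpa using hx0, (he x).2 hQx, by simp [map_span]⟩

theorem card_isotropicLines_map (e : M ≃ₛₗ[σ] M) (he : ∀ x, Q' (e x) = 0 ↔ Q x = 0)
    (W : Submodule k M) :
    #(isotropicLines Q' (W.map (e : M →ₛₗ[σ] M))) = #(isotropicLines Q W) := by
  rw [isotropicLines_map e he, mk_image_eq (map_injective_of_injective e.injective)]

end Semilinear

end QuadraticForm

open QuadraticForm

def detForm : QuadraticForm ℂ E4 :=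
  LinearMap.BilinMap.toQuadraticMap <|
    LinearMap.mk₂ ℂ (fun x y : E4 => (x (0, 0) * y (1, 1) - x (0, 1) * y (1, 0) : ℂ))
    (fun _ _ _ => by simp only [PiLp.add_apply]; ring)
    (fun _ _ _ => by simp only [PiLp.smul_apply, smul_eq_mul]; ring)
    (fun _ _ _ => by simp only [PiLp.add_apply]; ring)
    (fun _ _ _ => by simp only [PiLp.smul_apply, smul_eq_mul]; ring)

theorem detForm_apply (x : E4) : detForm x = x (0, 0) * x (1, 1) - x (0, 1) * x (1, 0) := rfl

theorem polar_detForm (x y : E4) :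
    polar detForm x y = x (0, 0) * y (1, 1) + x (1, 1) * y (0, 0) - x (0, 1) * y (1, 0) -
      x (1, 0) * y (0, 1) := by
  simp only [polar, detForm_apply, PiLp.add_apply]
  ring

theorem detForm_tp (u v : E2) : detForm (tp u v) = 0 := by
  simp only [detForm_apply, tp]
  ring

theorem exists_tp_eq_of_detForm_eq_zero {x : E4} (hx : detForm x = 0) : ∃ u v, tp u v = x := by
  obtain ⟨u₀, u₁, v₀, v₁, h₀₀, h₀₁, h₁₀, h₁₁⟩ :=
    exists_mul_eq_of_mul_eq_mul (sub_eq_zero.1 ((detForm_apply x).symm.trans hx))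
  refine ⟨WithLp.toLp 2 ![u₀, u₁], WithLp.toLp 2 ![v₀, v₁], ?_⟩
  ext ⟨i, j⟩
  fin_cases i <;> fin_cases j <;> simpa [tp]

theorem productLines_eq_isotropicLines (W : Submodule ℂ E4) :
    productLines W = isotropicLines detForm W := by
  ext L
  constructor
  · rintro ⟨u, v, h0, rfl, hle⟩
    exact ⟨tp u v, hle (Submodule.mem_span_singleton_self _), h0, detForm_tp u v, rfl⟩
  · rintro ⟨x, hx, hx0, hQx, rfl⟩
    obtain ⟨u, v, rfl⟩ := exists_tp_eq_of_detForm_eq_zero hQx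
    exact ⟨u, v, hx0, rfl, (Submodule.span_singleton_le_iff_mem _ _).2 hx⟩

/-- Viewing `x` as the `2 × 2` matrix `(x (i, j))`, this is `x ↦ (adj x)ᴴ`. -/
def spinFlip : E4 ≃ₛₗ[starRingEnd ℂ] E4 :=
  .ofInvolutive
    { toFun x := WithLp.toLp 2 fun p => (if p.1 = p.2 then 1 else -1) * star (x (1 - p.1, 1 - p.2))
      map_add' x y := by ext p; simp only [PiLp.add_apply, star_add]; ring
      map_smul' c x := by
        ext p
        simp only [PiLp.smul_apply, smul_eq_mul, star_mul', starRingEnd_apply]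
        ring }
    (fun x => by ext ⟨i, j⟩; fin_cases i <;> fin_cases j <;> simp)

theorem spinFlip_apply (x : E4) (i j : Fin 2) :
    spinFlip x (i, j) = (if i = j then 1 else -1) * star (x (1 - i, 1 - j)) := rfl

theorem detForm_spinFlip (x : E4) : detForm (spinFlip x) = star (detForm x) := by
  simp [detForm_apply, spinFlip_apply]
  ring

theorem inner_eq_polar_detForm_spinFlip (x y : E4) :
    inner ℂ x y = polar detForm (spinFlip x) y := by
  simp [polar_detForm, spinFlip_apply, PiLp.inner_apply, Fintype.sum_prod_type, Fin.sum_univ_two]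
  ring

theorem spinFlip_spinFlip (x : E4) : spinFlip (spinFlip x) = x := spinFlip.symm_apply_apply x

theorem polarBilin_detForm_nondegenerate : (polarBilin detForm).Nondegenerate := by
  refine (polarBilin_isRefl detForm).nondegenerate_iff_separatingLeft.2 fun x hx => ?_
  have h : inner ℂ (spinFlip x) (spinFlip x) = 0 := by
    rw [inner_eq_polar_detForm_spinFlip, spinFlip_spinFlip]
    exact hx _
  simpa using h

theorem orthogonal_eq_polarBilin_orthogonal_map_spinFlip (V : Submodule ℂ E4) :
    Vᗮ = BilinForm.orthogonal (polarBilin detForm)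
      (V.map (spinFlip : E4 →ₛₗ[starRingEnd ℂ] E4)) := by
  ext x
  rw [Submodule.mem_orthogonal, BilinForm.mem_orthogonal_iff]
  constructor
  · rintro h _ ⟨u, hu, rfl⟩
    exact (inner_eq_polar_detForm_spinFlip u x).symm.trans (h u hu)
  · intro h u hu
    exact (inner_eq_polar_detForm_spinFlip u x).trans (h _ (mem_map_of_mem hu))

/-- For any two-dimensional subspace V of ℂ² ⊗ ℂ², the set of product lines in V and the
set of product lines in V⊥ have the same cardinality, and this common cardinality is
either 1, 2, or infinite. -/
theorem productLines_card_eq_and_one_two_or_infinite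
    (V : Submodule ℂ E4) (hV : Module.finrank ℂ V = 2) :
    Cardinal.mk (productLines V) = Cardinal.mk (productLines Vᗮ) ∧
      (Cardinal.mk (productLines V) = 1 ∨ Cardinal.mk (productLines V) = 2 ∨
        (productLines V).Infinite) := by
  simp only [productLines_eq_isotropicLines]
  refine ⟨?_, card_isotropicLines_eq_one_or_two_or_infinite hV⟩
  have hE4 : finrank ℂ E4 = 4 := by simp
  have hKV := (spinFlip.finrank_map_eq_of_semilinear V).trans hV
  have hdet (x : E4) : detForm (spinFlip x) = 0 ↔ detForm x = 0 := by simp [detForm_spinFlip]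
  rw [orthogonal_eq_polarBilin_orthogonal_map_spinFlip,
    card_isotropicLines_polarBilin_orthogonal polarBilin_detForm_nondegenerate hE4 hKV,
    card_isotropicLines_map spinFlip hdet]
end
end

section
/- With tan α = (√5 − 1)/2 and α ∈ (0, π/2), the two product vectors |x₊⟩ ⊗ |x₊⟩ and |x̄₊⟩ ⊗ |x̄₊⟩, where |x₊⟩ = cos α |0⟩ + sin α |1⟩ and |x̄₊⟩ = sin α |0⟩ − cos α |1⟩, form an orthonormal basis of the two-dimensional subspace S⁺ = span{(|00⟩ + |11⟩)/√2, (|00⟩ + |01⟩ + |10⟩)/√3} of ℂ² ⊗ ℂ². -/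
/-!
Put `s = sin α`, `c = cos α`. Since `tan α = -ψ` with `ψ = (1 - √5) / 2` a root of
`ψ² = ψ + 1`, we get `s² + s c = c²`, so
`x₊ ⊗ x₊ = s² (|00⟩ + |11⟩) + s c (|00⟩ + |01⟩ + |10⟩)` and
`x̄₊ ⊗ x̄₊ = c² (|00⟩ + |11⟩) - s c (|00⟩ + |01⟩ + |10⟩)`: an invertible change of generators of
`S⁺` (determinant `-s c`). Orthonormality is inherited from that of `x₊, x̄₊`, because
`⟪u ⊗ u, v ⊗ v⟫ = ⟪u, v⟫²`.
-/

noncomputable section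

namespace Submodule

variable {K V : Type*} [Field K] [AddCommGroup V] [Module K V]

theorem span_pair_eq_of_det_ne_zero {a b c d : K} (h : a * d - b * c ≠ 0) (x y : V) :
    span K {a • x + b • y, c • x + d • y} = span K {x, y} := by
  set S := span K {a • x + b • y, c • x + d • y}
  have hv₁ : a • x + b • y ∈ S := subset_span (Set.mem_insert _ _)
  have hv₂ : c • x + d • y ∈ S := subset_span (Set.mem_insert_of_mem _ rfl)
  have hx : (a * d - b * c) • x ∈ S := by
    convert sub_mem (smul_mem S d hv₁) (smul_mem S b hv₂) using 1
    module
  have hy : (a * d - b * c) • y ∈ S := by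
    convert sub_mem (smul_mem S a hv₂) (smul_mem S c hv₁) using 1
    module
  apply le_antisymm
  · rw [span_le, Set.insert_subset_iff, Set.singleton_subset_iff]
    exact ⟨mem_span_pair.mpr ⟨a, b, rfl⟩, mem_span_pair.mpr ⟨c, d, rfl⟩⟩
  · rw [span_le, Set.insert_subset_iff, Set.singleton_subset_iff]
    exact ⟨(smul_mem_iff S h).mp hx, (smul_mem_iff S h).mp hy⟩

theorem span_pair_smul_eq {a b : K} (ha : a ≠ 0) (hb : b ≠ 0) (x y : V) :
    span K {a • x, b • y} = span K {x, y} := by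
  have := span_pair_eq_of_det_ne_zero (a := a) (b := 0) (c := 0) (d := b)
    (by rw [mul_zero, sub_zero]; exact mul_ne_zero ha hb) x y
  simpa only [zero_smul, add_zero, zero_add] using this

end Submodule

namespace Real

theorem sin_ne_zero_and_cos_ne_zero_of_tan_ne_zero {x : ℝ} (h : tan x ≠ 0) :
    sin x ≠ 0 ∧ cos x ≠ 0 :=
  div_ne_zero_iff.mp (tan_eq_sin_div_cos x ▸ h)

theorem sin_sq_add_sin_mul_cos_of_tan_eq_neg_goldenConj {x : ℝ} (h : tan x = -goldenConj) :
    sin x ^ 2 + sin x * cos x = cos x ^ 2 := by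
  have hc := (sin_ne_zero_and_cos_ne_zero_of_tan_ne_zero
    (h ▸ neg_ne_zero.mpr goldenConj_ne_zero)).2
  have hs : sin x = -goldenConj * cos x := by
    rw [← h, tan_eq_sin_div_cos, div_mul_cancel₀ _ hc]
  rw [hs]
  linear_combination cos x ^ 2 * goldenConj_sq

end Real

theorem inner_tp (u v u' v' : E2) :
    inner ℂ (tp u v) (tp u' v') = inner ℂ u u' * inner ℂ v v' := by
  simp only [tp, PiLp.inner_apply, Fintype.sum_prod_type, Finset.sum_mul_sum,
    RCLike.inner_apply, map_mul]
  congr! 2 with i _ j _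
  ring

theorem Orthonormal.tp_self {ι : Type*} {f : ι → E2} (hf : Orthonormal ℂ f) :
    Orthonormal ℂ fun i => tp (f i) (f i) := by
  classical
  rw [orthonormal_iff_ite] at hf ⊢
  intro i j
  rw [inner_tp, hf]
  split_ifs <;> simp

theorem orthonormal_pair_of_sq_add_sq_eq_one {c s : ℝ} (h : c ^ 2 + s ^ 2 = 1) :
    Orthonormal ℂ ![(c : ℂ) • e 0 + (s : ℂ) • e 1, (s : ℂ) • e 0 - (c : ℂ) • e 1] := by
  rw [orthonormal_iff_ite]
  intro i j
  fin_cases i <;> fin_cases j <;>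
    simp [e, PiLp.inner_apply, Fin.sum_univ_two, -inner_self_eq_norm_sq_to_K]
  · exact_mod_cast (by linear_combination h : c * c + s * s = 1)
  · ring
  · ring
  · exact_mod_cast (by linear_combination h : s * s + c * c = 1)

theorem tp_self_eq_of_sq_add_mul_eq_sq {a b : ℂ} (h : b ^ 2 + b * a = a ^ 2) :
    tp (a • e 0 + b • e 1) (a • e 0 + b • e 1) =
      b ^ 2 • (ket 0 0 + ket 1 1) + (b * a) • (ket 0 0 + ket 0 1 + ket 1 0) := by
  have expand : tp (a • e 0 + b • e 1) (a • e 0 + b • e 1) =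
      a ^ 2 • ket 0 0 + (a * b) • (ket 0 1 + ket 1 0) + b ^ 2 • ket 1 1 := by
    ext p
    fin_cases p <;> simp [tp, ket, e, PiLp.single_apply, sq, mul_comm]
  rw [expand]
  linear_combination (norm := module) -h • ket 0 0

theorem product_orthonormal_basis_of_Splus_general
    (α : ℝ)
    (htan : Real.tan α = (Real.sqrt 5 - 1) / 2)
    (xp xbp : E2)
    (hxp : xp = (Real.cos α : ℂ) • e 0 + (Real.sin α : ℂ) • e 1)
    (hxbp : xbp = (Real.sin α : ℂ) • e 0 - (Real.cos α : ℂ) • e 1)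
    (Splus : Submodule ℂ E4)
    (hS : Splus = Submodule.span ℂ
      {(Real.sqrt 2 : ℂ)⁻¹ • (ket 0 0 + ket 1 1),
       (Real.sqrt 3 : ℂ)⁻¹ • (ket 0 0 + ket 0 1 + ket 1 0)}) :
    Orthonormal ℂ ![tp xp xp, tp xbp xbp] ∧
      Submodule.span ℂ {tp xp xp, tp xbp xbp} = Splus := by
  have htan' : Real.tan α = -Real.goldenConj := by rw [htan]; ring
  obtain ⟨hs, hc⟩ := Real.sin_ne_zero_and_cos_ne_zero_of_tan_ne_zero
    (htan' ▸ neg_ne_zero.mpr Real.goldenConj_ne_zero)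
  have golden : (Real.sin α : ℂ) ^ 2 + Real.sin α * Real.cos α = (Real.cos α : ℂ) ^ 2 := by
    exact_mod_cast Real.sin_sq_add_sin_mul_cos_of_tan_eq_neg_goldenConj htan'
  constructor
  · rw [hxp, hxbp]
    convert (orthonormal_pair_of_sq_add_sq_eq_one (Real.cos_sq_add_sin_sq α)).tp_self using 1
    ext i : 1
    fin_cases i <;> rfl
  rw [hS, hxp, hxbp, sub_eq_add_neg, ← neg_smul, tp_self_eq_of_sq_add_mul_eq_sq golden,
    tp_self_eq_of_sq_add_mul_eq_sq (by linear_combination -golden),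
    Submodule.span_pair_eq_of_det_ne_zero, Submodule.span_pair_smul_eq]
  · simp
  · simp
  · have pythagoras : (Real.cos α : ℂ) ^ 2 + (Real.sin α : ℂ) ^ 2 = 1 := by
      exact_mod_cast Real.cos_sq_add_sin_sq α
    calc _ = -((Real.sin α : ℂ) * Real.cos α) := by
          linear_combination -((Real.sin α : ℂ) * Real.cos α) * pythagoras
      _ ≠ 0 := neg_ne_zero.mpr (mul_ne_zero (Complex.ofReal_ne_zero.mpr hs)
          (Complex.ofReal_ne_zero.mpr hc))

/-- With tan α = (√5 − 1)/2 and α ∈ (0, π/2), the product vectors |x₊⟩ ⊗ |x₊⟩ and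
|x̄₊⟩ ⊗ |x̄₊⟩, where |x₊⟩ = cos α |0⟩ + sin α |1⟩ and |x̄₊⟩ = sin α |0⟩ − cos α |1⟩, form an
orthonormal basis of S⁺ = span{(|00⟩+|11⟩)/√2, (|00⟩+|01⟩+|10⟩)/√3}. -/
theorem product_orthonormal_basis_of_Splus
    (α : ℝ) (hα : α ∈ Set.Ioo 0 (Real.pi / 2))
    (htan : Real.tan α = (Real.sqrt 5 - 1) / 2)
    (xp xbp : E2)
    (hxp : xp = (Real.cos α : ℂ) • e 0 + (Real.sin α : ℂ) • e 1)
    (hxbp : xbp = (Real.sin α : ℂ) • e 0 - (Real.cos α : ℂ) • e 1)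
    (Splus : Submodule ℂ E4)
    (hS : Splus = Submodule.span ℂ
      {(Real.sqrt 2 : ℂ)⁻¹ • (ket 0 0 + ket 1 1),
       (Real.sqrt 3 : ℂ)⁻¹ • (ket 0 0 + ket 0 1 + ket 1 0)}) :
    Orthonormal ℂ ![tp xp xp, tp xbp xbp] ∧
      Submodule.span ℂ {tp xp xp, tp xbp xbp} = Splus :=
  product_orthonormal_basis_of_Splus_general α htan xp xbp hxp hxbp Splus hS
end
end

section
/- The product vector |x₋⟩ ⊗ |x₋'⟩, where |x₋⟩ = (|0⟩ + e^{iπ/3}|1⟩)/√2 and |x₋'⟩ = (|0⟩ + e^{−iπ/3}|1⟩)/√2, is a unit vector orthogonal to the two-dimensional subspace S⁻ = span{(|00⟩ − |11⟩)/√2, (|01⟩ + |10⟩ − |00⟩)/√3} of ℂ² ⊗ ℂ². -/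
noncomputable section

open Complex
open scoped InnerProductSpace

theorem Submodule.mem_orthogonal_span_pair {𝕜 E : Type*} [RCLike 𝕜] [NormedAddCommGroup E]
    [InnerProductSpace 𝕜 E] {a b v : E} :
    v ∈ (span 𝕜 {a, b})ᗮ ↔ ⟪a, v⟫_𝕜 = 0 ∧ ⟪b, v⟫_𝕜 = 0 := by
  rw [← span_singleton_le_iff_mem, ← isOrtho_iff_le, isOrtho_comm, isOrtho_span]
  simp

theorem tp_apply (u v : E2) (p : Fin 2 × Fin 2) : tp u v p = u p.1 * v p.2 := rfl

theorem norm_tp (u v : E2) : ‖tp u v‖ = ‖u‖ * ‖v‖ := by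
  simp only [EuclideanSpace.norm_eq, tp_apply, norm_mul, mul_pow, Fintype.sum_prod_type,
    ← Finset.sum_mul_sum, Real.sqrt_mul (Finset.sum_nonneg fun i _ => sq_nonneg ‖u i‖)]

theorem ket_eq_single (i j : Fin 2) : ket i j = EuclideanSpace.single (i, j) 1 := by
  ext ⟨k, l⟩
  by_cases hk : k = i <;> by_cases hl : l = j <;>
    simp [ket, tp_apply, e, hk, hl]

theorem inner_ket_left (i j : Fin 2) (w : E4) : ⟪ket i j, w⟫_ℂ = w (i, j) := by
  simp [ket_eq_single, EuclideanSpace.inner_single_left]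

def balancedState (z : ℂ) : E2 := (Real.sqrt 2 : ℂ)⁻¹ • (e 0 + z • e 1)

theorem balancedState_apply_zero (z : ℂ) : balancedState z 0 = (Real.sqrt 2 : ℂ)⁻¹ := by
  simp [balancedState, e]

theorem balancedState_apply_one (z : ℂ) : balancedState z 1 = (Real.sqrt 2 : ℂ)⁻¹ * z := by
  simp [balancedState, e]

theorem norm_balancedState {z : ℂ} (hz : ‖z‖ = 1) : ‖balancedState z‖ = 1 := by
  rw [EuclideanSpace.norm_eq, Fin.sum_univ_two, balancedState_apply_zero, balancedState_apply_one,
    norm_mul, hz, mul_one, norm_inv, Complex.norm_real, Real.norm_of_nonneg (Real.sqrt_nonneg 2),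
    inv_pow, Real.sq_sqrt zero_le_two]
  norm_num

theorem tp_balancedState_mem_orthogonal {z w : ℂ} (hmul : z * w = 1) (hadd : z + w = 1) :
    tp (balancedState z) (balancedState w) ∈ (Submodule.span ℂ
      {(Real.sqrt 2 : ℂ)⁻¹ • (ket 0 0 - ket 1 1),
       (Real.sqrt 3 : ℂ)⁻¹ • (ket 0 1 + ket 1 0 - ket 0 0)})ᗮ := by
  rw [Submodule.mem_orthogonal_span_pair]
  simp only [inner_smul_left, inner_sub_left, inner_add_left, inner_ket_left, tp_apply,
    balancedState_apply_zero, balancedState_apply_one]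
  constructor
  · linear_combination (-(starRingEnd ℂ) (Real.sqrt 2 : ℂ)⁻¹ * (Real.sqrt 2 : ℂ)⁻¹ ^ 2) * hmul
  · linear_combination ((starRingEnd ℂ) (Real.sqrt 3 : ℂ)⁻¹ * (Real.sqrt 2 : ℂ)⁻¹ ^ 2) * hadd

theorem exp_mul_I_mul_exp_neg_mul_I (θ : ℂ) : exp (θ * I) * exp (-θ * I) = 1 := by
  rw [← exp_add, neg_mul, add_neg_cancel, exp_zero]

theorem exp_pi_div_three_mul_I_add_exp_neg :
    exp (Real.pi / 3 * I) + exp (-(Real.pi / 3) * I) = 1 := by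
  have hcos : cos (Real.pi / 3) = 1 / 2 := by
    have h := congrArg ((↑) : ℝ → ℂ) Real.cos_pi_div_three
    push_cast at h
    exact h
  rw [← two_cos, hcos]
  norm_num

/-- The product vector |x₋⟩ ⊗ |x₋'"'"'⟩, with |x₋⟩ = (|0⟩ + e^{iπ/3}|1⟩)/√2 and
|x₋'"'"'⟩ = (|0⟩ + e^{−iπ/3}|1⟩)/√2, is a unit vector orthogonal to the subspace
S⁻ = span{(|00⟩−|11⟩)/√2, (|01⟩+|10⟩−|00⟩)/√3}. -/
theorem product_unit_vector_orthogonal_to_Sminus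
    (xm xm' : E2)
    (hxm : xm = (Real.sqrt 2 : ℂ)⁻¹ • (e 0 + Complex.exp ((Real.pi / 3 : ℂ) * Complex.I) • e 1))
    (hxm' : xm' = (Real.sqrt 2 : ℂ)⁻¹ • (e 0 + Complex.exp (-(Real.pi / 3 : ℂ) * Complex.I) • e 1))
    (Sminus : Submodule ℂ E4)
    (hS : Sminus = Submodule.span ℂ
      {(Real.sqrt 2 : ℂ)⁻¹ • (ket 0 0 - ket 1 1),
       (Real.sqrt 3 : ℂ)⁻¹ • (ket 0 1 + ket 1 0 - ket 0 0)}) :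
    ‖tp xm xm'‖ = 1 ∧ tp xm xm' ∈ Sminusᗮ := by
  have hω : ‖exp (Real.pi / 3 * I)‖ = 1 := by
    exact_mod_cast norm_exp_ofReal_mul_I (Real.pi / 3)
  have hω' : ‖exp (-(Real.pi / 3) * I)‖ = 1 := by
    exact_mod_cast norm_exp_ofReal_mul_I (-(Real.pi / 3))
  change xm = balancedState _ at hxm
  change xm' = balancedState _ at hxm'
  subst hxm hxm' hS
  exact ⟨by rw [norm_tp, norm_balancedState hω, norm_balancedState hω', mul_one],
    tp_balancedState_mem_orthogonal (exp_mul_I_mul_exp_neg_mul_I _)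
      exp_pi_div_three_mul_I_add_exp_neg⟩
end
end
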